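/- The linearization at the scaling fixed point S = (√(3/2)γ/λ, 1-3γ/λ²) (for λ² > 3γ, γ ∈ (0,2)) has eigenvalues -(3/4)(2-γ)(1 ± √r), where r = [24γ² - (9γ-2)λ²]/[λ²(2-γ)]. Both eigenvalues have negative real part; in particular S is a stable node when 3γ < λ² < 24γ²/(9γ-2) (for 9γ > 2) and a stable spiral (r < 0) when λ² > 24γ²/(9γ-2). -/

import Mathlib

/-- The `Σ`-component of the vector field. -/
noncomputable def fS (lam gam s w : ℝ) : ℝ :=
  -(2 - (-1 + 3 * s ^ 2 + 3 / 2 * gam * w)) * s + Real.sqrt (3 / 2) * lam * (1 - s ^ 2 - w)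

/-- The `Ω`-component of the vector field. -/
noncomputable def fO (gam s w : ℝ) : ℝ :=
  (2 * (1 + (-1 + 3 * s ^ 2 + 3 / 2 * gam * w)) - 3 * gam) * w

/-- The Jacobian matrix of the vector field at `(s,w)`. -/
noncomputable def Jac (lam gam s w : ℝ) : Matrix (Fin 2) (Fin 2) ℝ :=
  !![deriv (fun x => fS lam gam x w) s, deriv (fun y => fS lam gam s y) w;
     deriv (fun x => fO gam x w) s, deriv (fun y => fO gam s y) w]

/-!
At `S` the Jacobian has trace `-2a` and determinant `a²(1 - r)`, where `a = (3/4)(2-γ)`, so its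
characteristic polynomial factors as `(μ + a(1 + z))(μ + a(1 - z))` for any `z` with `z² = r`.
Moreover `r < 1` is equivalent to `λ² > 3γ`, and a complex square root of a real number below `1`
has real part in `(-1, 1)`; hence both eigenvalues have negative real part.
-/

theorem deriv_cubic {𝕜 : Type*} [NontriviallyNormedField 𝕜] (a b c d x : 𝕜) :
    deriv (fun t => a * t ^ 3 + b * t ^ 2 + c * t + d) x = 3 * a * x ^ 2 + 2 * b * x + c := by
  have h := ((((hasDerivAt_pow 3 x).const_mul a).add ((hasDerivAt_pow 2 x).const_mul b)).add
    ((hasDerivAt_id' x).const_mul c)).add_const d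
  exact h.deriv.trans (by push_cast; ring)

theorem Complex.abs_re_lt_one_of_sq_eq_ofReal {z : ℂ} {r : ℝ} (hz : z ^ 2 = r) (hr : r < 1) :
    |z.re| < 1 := by
  have hre : z.re ^ 2 - z.im ^ 2 = r := by simpa [sq] using congrArg Complex.re hz
  have him : z.re * z.im = 0 := by
    have := congrArg Complex.im hz
    simp only [sq, Complex.mul_im, Complex.ofReal_im] at this
    linarith
  rw [← sq_lt_one_iff_abs_lt_one]
  rcases mul_eq_zero.mp him with h | h
  · simp [h]
  · nlinarith

theorem Complex.re_neg_ofReal_mul_neg {a : ℝ} (ha : 0 < a) {w : ℂ} (hw : 0 < w.re) :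
    (-(a : ℂ) * w).re < 0 := by
  simpa using mul_pos ha hw

theorem Matrix.det_map_ofReal_sub_smul_one_eq_zero_iff (M : Matrix (Fin 2) (Fin 2) ℝ) {a r : ℝ}
    {z : ℂ} (htr : M.trace = -2 * a) (hdet : M.det = a ^ 2 * (1 - r)) (hz : z ^ 2 = r)
    (μ : ℂ) :
    (M.map Complex.ofReal - μ • 1).det = 0 ↔ μ = -a * (1 + z) ∨ μ = -a * (1 - z) := by
  rw [trace_fin_two] at htr
  rw [det_fin_two] at hdet
  have htrC : (M 0 0 : ℂ) + M 1 1 = -2 * a := by exact_mod_cast htr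
  have hdetC : (M 0 0 : ℂ) * M 1 1 - M 0 1 * M 1 0 = a ^ 2 * (1 - r) := by exact_mod_cast hdet
  have hchar : (M.map Complex.ofReal - μ • 1).det = (μ + a * (1 + z)) * (μ + a * (1 - z)) := by
    rw [det_fin_two]
    simp only [sub_apply, map_apply, smul_apply, one_apply_eq, one_apply_ne, smul_eq_mul, mul_one,
      mul_zero, sub_zero, zero_ne_one, one_ne_zero, ne_eq, not_false_eq_true]
    linear_combination hdetC - μ * htrC + a ^ 2 * hz
  rw [hchar, mul_eq_zero, add_eq_zero_iff_eq_neg, add_eq_zero_iff_eq_neg, neg_mul, neg_mul]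

theorem Complex.cpow_one_half_sq (x : ℂ) : (x ^ (1 / 2 : ℂ)) ^ 2 = x := by
  rw [one_div]; exact_mod_cast Complex.cpow_nat_inv_pow x two_ne_zero

theorem Jac_eq (lam gam s w : ℝ) :
    Jac lam gam s w =
      !![-3 + 9 * s ^ 2 + 3 / 2 * gam * w - 2 * √(3 / 2) * lam * s,
          3 / 2 * gam * s - √(3 / 2) * lam;
        12 * s * w, 6 * s ^ 2 + 6 * gam * w - 3 * gam] := by
  have h11 : deriv (fun x => fS lam gam x w) s =
      -3 + 9 * s ^ 2 + 3 / 2 * gam * w - 2 * √(3 / 2) * lam * s := by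
    have : (fun x => fS lam gam x w) = fun x =>
        3 * x ^ 3 + (-√(3 / 2) * lam) * x ^ 2 + (-3 + 3 / 2 * gam * w) * x
          + √(3 / 2) * lam * (1 - w) := by
      funext x; unfold fS; ring
    rw [this, deriv_cubic]; ring
  have h12 : deriv (fun y => fS lam gam s y) w = 3 / 2 * gam * s - √(3 / 2) * lam := by
    have : (fun y => fS lam gam s y) = fun y =>
        0 * y ^ 3 + 0 * y ^ 2 + (3 / 2 * gam * s - √(3 / 2) * lam) * y
          + (3 * s ^ 3 - 3 * s + √(3 / 2) * lam * (1 - s ^ 2)) := by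
      funext y; unfold fS; ring
    rw [this, deriv_cubic]; ring
  have h21 : deriv (fun x => fO gam x w) s = 12 * s * w := by
    have : (fun x => fO gam x w) = fun x =>
        0 * x ^ 3 + 6 * w * x ^ 2 + 0 * x + (3 / 2 * gam * w - 3 / 2 * gam) * 2 * w := by
      funext x; unfold fO; ring
    rw [this, deriv_cubic]; ring
  have h22 : deriv (fun y => fO gam s y) w = 6 * s ^ 2 + 6 * gam * w - 3 * gam := by
    have : (fun y => fO gam s y) = fun y =>
        0 * y ^ 3 + 3 * gam * y ^ 2 + (6 * s ^ 2 - 3 * gam) * y + 0 := by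
      funext y; unfold fO; ring
    rw [this, deriv_cubic]; ring
  rw [Jac, h11, h12, h21, h22]

noncomputable def scalingDiscr (lam gam : ℝ) : ℝ :=
  (24 * gam ^ 2 - (9 * gam - 2) * lam ^ 2) / (lam ^ 2 * (2 - gam))

theorem sq_sigma_scalingPoint (lam gam : ℝ) :
    (√(3 / 2) * (gam / lam)) ^ 2 = 3 / 2 * gam ^ 2 / lam ^ 2 := by
  rw [mul_pow, Real.sq_sqrt (by norm_num)]; ring

theorem mul_sigma_scalingPoint {lam : ℝ} (gam : ℝ) (hl : lam ≠ 0) :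
    √(3 / 2) * lam * (√(3 / 2) * (gam / lam)) = 3 / 2 * gam := by
  field_simp
  linear_combination 2 * gam * Real.sq_sqrt (show (0 : ℝ) ≤ 3 / 2 by norm_num)

section ScalingPoint

variable {lam gam : ℝ}

theorem trace_Jac_scalingPoint (hl : lam ≠ 0) :
    (Jac lam gam (√(3 / 2) * (gam / lam)) (1 - 3 * gam / lam ^ 2)).trace =
      -2 * (3 / 4 * (2 - gam)) := by
  rw [Jac_eq, Matrix.trace_fin_two_of]
  linear_combination 15 * sq_sigma_scalingPoint lam gam - 2 * mul_sigma_scalingPoint gam hl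

theorem det_Jac_scalingPoint (hl : lam ≠ 0) (hg2 : gam ≠ 2) :
    (Jac lam gam (√(3 / 2) * (gam / lam)) (1 - 3 * gam / lam ^ 2)).det =
      (3 / 4 * (2 - gam)) ^ 2 * (1 - scalingDiscr lam gam) := by
  have hs2 := sq_sigma_scalingPoint lam gam
  have hls := mul_sigma_scalingPoint gam hl
  have h2g : 2 - gam ≠ 0 := sub_ne_zero.mpr (Ne.symm hg2)
  have hr : (3 / 4 * (2 - gam)) ^ 2 * (1 - scalingDiscr lam gam) =
      9 / 16 * (2 - gam) ^ 2
        - 9 / 16 * (2 - gam) * (24 * gam ^ 2 - (9 * gam - 2) * lam ^ 2) / lam ^ 2 := by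
    rw [scalingDiscr]; field_simp; ring
  rw [Jac_eq, Matrix.det_fin_two_of, hr]
  generalize √(3 / 2) * (gam / lam) = s at hs2 hls ⊢
  linear_combination (norm := skip)
    (54 * s ^ 2 - 54 * gam ^ 2 / lam ^ 2 + 18 * gam - 18 - 12 * (√(3 / 2) * lam * s)) * hs2
    + (18 * gam ^ 2 / lam ^ 2 - 36 * gam / lam ^ 2 - 6 * gam + 12) * hls
  field_simp
  ring

theorem scalingDiscr_lt_one (hg : 0 < gam) (hg2 : gam < 2) (hlg : 3 * gam < lam ^ 2) :
    scalingDiscr lam gam < 1 := by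
  rw [scalingDiscr, div_lt_one (by nlinarith)]
  nlinarith

theorem scalingDiscr_pos (hl : lam ≠ 0) (hg2 : gam < 2) (h9 : 2 < 9 * gam)
    (h : lam ^ 2 < 24 * gam ^ 2 / (9 * gam - 2)) : 0 < scalingDiscr lam gam := by
  rw [lt_div_iff₀ (by linarith)] at h
  exact div_pos (by linarith) (mul_pos (by positivity) (by linarith))

theorem scalingDiscr_neg (hl : lam ≠ 0) (hg2 : gam < 2) (h9 : 2 < 9 * gam)
    (h : 24 * gam ^ 2 / (9 * gam - 2) < lam ^ 2) : scalingDiscr lam gam < 0 := by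
  rw [div_lt_iff₀ (by linarith)] at h
  exact div_neg_of_neg_of_pos (by linarith) (mul_pos (by positivity) (by linarith))

end ScalingPoint

theorem stmt_16_general (lam gam r : ℝ) (hg : 0 < gam) (hg2 : gam < 2)
    (hlg : 3 * gam < lam ^ 2)
    (hr : r = (24 * gam ^ 2 - (9 * gam - 2) * lam ^ 2) / (lam ^ 2 * (2 - gam))) :
    (∀ μ : ℂ, ((Jac lam gam (Real.sqrt (3 / 2) * (gam / lam)) (1 - 3 * gam / lam ^ 2)).map
          (Complex.ofReal) - μ • (1 : Matrix (Fin 2) (Fin 2) ℂ)).det = 0 ↔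
      μ = -(3 / 4 : ℂ) * (2 - (gam : ℂ)) * (1 + (r : ℂ) ^ ((1 : ℂ) / 2)) ∨
      μ = -(3 / 4 : ℂ) * (2 - (gam : ℂ)) * (1 - (r : ℂ) ^ ((1 : ℂ) / 2))) ∧
    ((-(3 / 4 : ℂ) * (2 - (gam : ℂ)) * (1 + (r : ℂ) ^ ((1 : ℂ) / 2))).re < 0 ∧
      (-(3 / 4 : ℂ) * (2 - (gam : ℂ)) * (1 - (r : ℂ) ^ ((1 : ℂ) / 2))).re < 0) ∧
    (2 < 9 * gam → lam ^ 2 < 24 * gam ^ 2 / (9 * gam - 2) → 0 < r) ∧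
    (2 < 9 * gam → 24 * gam ^ 2 / (9 * gam - 2) < lam ^ 2 → r < 0) := by
  have hl : lam ≠ 0 := by rintro rfl; linarith
  have hr' : r = scalingDiscr lam gam := hr
  subst hr'
  have hz := Complex.cpow_one_half_sq (scalingDiscr lam gam)
  have hzre := abs_lt.mp (Complex.abs_re_lt_one_of_sq_eq_ofReal hz (scalingDiscr_lt_one hg hg2 hlg))
  have ha : 0 < 3 / 4 * (2 - gam) := by linarith
  rw [show -(3 / 4 : ℂ) * (2 - (gam : ℂ)) = -((3 / 4 * (2 - gam) : ℝ) : ℂ) by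
    push_cast; ring]
  refine ⟨Matrix.det_map_ofReal_sub_smul_one_eq_zero_iff _ (trace_Jac_scalingPoint hl)
      (det_Jac_scalingPoint hl hg2.ne) hz, ⟨?_, ?_⟩,
    scalingDiscr_pos hl hg2, scalingDiscr_neg hl hg2⟩
  · exact Complex.re_neg_ofReal_mul_neg ha (by rw [Complex.add_re, Complex.one_re]; linarith)
  · exact Complex.re_neg_ofReal_mul_neg ha (by rw [Complex.sub_re, Complex.one_re]; linarith)

/-- The linearization at the scaling point `S = (√(3/2)γ/λ, 1-3γ/λ²)` has (complex)
eigenvalues `-(3/4)(2-γ)(1 ± √r)` with `r = [24γ² - (9γ-2)λ²]/[λ²(2-γ)]`; both have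
negative real part; `r > 0` (stable node) when `3γ < λ² < 24γ²/(9γ-2)` with `9γ > 2`,
and `r < 0` (stable spiral) when `λ² > 24γ²/(9γ-2)` with `9γ > 2`. -/
theorem stmt_16 (lam gam r : ℝ) (hl : 0 < lam) (hg : 0 < gam) (hg2 : gam < 2)
    (hlg : 3 * gam < lam ^ 2)
    (hr : r = (24 * gam ^ 2 - (9 * gam - 2) * lam ^ 2) / (lam ^ 2 * (2 - gam))) :
    (∀ μ : ℂ, ((Jac lam gam (Real.sqrt (3 / 2) * (gam / lam)) (1 - 3 * gam / lam ^ 2)).map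
          (Complex.ofReal) - μ • (1 : Matrix (Fin 2) (Fin 2) ℂ)).det = 0 ↔
      μ = -(3 / 4 : ℂ) * (2 - (gam : ℂ)) * (1 + (r : ℂ) ^ ((1 : ℂ) / 2)) ∨
      μ = -(3 / 4 : ℂ) * (2 - (gam : ℂ)) * (1 - (r : ℂ) ^ ((1 : ℂ) / 2))) ∧
    ((-(3 / 4 : ℂ) * (2 - (gam : ℂ)) * (1 + (r : ℂ) ^ ((1 : ℂ) / 2))).re < 0 ∧
      (-(3 / 4 : ℂ) * (2 - (gam : ℂ)) * (1 - (r : ℂ) ^ ((1 : ℂ) / 2))).re < 0) ∧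
    (2 < 9 * gam → lam ^ 2 < 24 * gam ^ 2 / (9 * gam - 2) → 0 < r) ∧
    (2 < 9 * gam → 24 * gam ^ 2 / (9 * gam - 2) < lam ^ 2 → r < 0) :=
  stmt_16_general lam gam r hg hg2 hlg hr
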